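/- For every natural number m ≥ 0 and every real z with 0 < z ≤ 1, the (2m+3)-fold convolution of f satisfies f^{*(2m+3)}(z) = (π/4)^(m+1)·(2/3)·(2/5)⋯(2/(2m+1))·z^(m + 1/2), where the product (2/3)·(2/5)⋯(2/(2m+1)) is empty (equal to 1) when m = 0. -/

import Mathlib

open MeasureTheory Real

/-- The density of `X²` for `X` uniform on `[-1,1]`:
`f z = (1/2) z^(-1/2)` for `0 < z < 1`, and `0` otherwise. -/
noncomputable def f (z : ℝ) : ℝ :=
  if 0 < z ∧ z < 1 then (1 / 2) * z ^ (-(1 / 2) : ℝ) else 0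

/-- Convolution of real functions: `(g ⋆ h)(z) = ∫ g λ · h (z − λ) dλ`. -/
noncomputable def conv (g h : ℝ → ℝ) (z : ℝ) : ℝ :=
  ∫ l, g l * h (z - l)

/-- `nconv n` is the `n`-fold convolution `f^{*n}` (for `n ≥ 1`):
`f^{*1} = f` and `f^{*(n+1)} = f^{*n} ⋆ f`. -/
noncomputable def nconv : ℕ → ℝ → ℝ
  | 0 => fun _ => 0
  | 1 => f
  | (n + 2) => conv (nconv (n + 1)) f

lemma key_beta (a : ℝ) (ha : 0 < a + 1) {z : ℝ} (hz : 0 < z) :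
    ∫ x in (0:ℝ)..z, x ^ a * (z - x) ^ (-(1/2) : ℝ) =
      Real.Gamma (a+1) * Real.Gamma (1/2) / Real.Gamma (a + 3/2) * z ^ (a + 1/2) := by
  have hg : (0:ℝ) < Real.Gamma (a + 3/2) := Real.Gamma_pos_of_pos (by linarith)
  have h1 : ((∫ x in (0:ℝ)..z, x ^ a * (z - x) ^ (-(1/2) : ℝ) : ℝ) : ℂ)
      = ∫ x in (0:ℝ)..z, (x:ℂ) ^ ((a+1:ℂ) - 1) * ((z:ℂ) - x) ^ ((1/2:ℂ) - 1) := by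
    rw [← intervalIntegral.integral_ofReal]
    apply intervalIntegral.integral_congr
    intro x hx
    rw [Set.uIcc_of_le hz.le] at hx
    have hx0 : 0 ≤ x := hx.1
    have hx1 : 0 ≤ z - x := by linarith [hx.2]
    show (((x ^ a * (z - x) ^ (-(1/2):ℝ)) : ℝ) : ℂ)
        = (x:ℂ) ^ ((a:ℂ)+1-1) * ((z:ℂ) - x) ^ ((1/2:ℂ)-1)
    rw [Complex.ofReal_mul, Complex.ofReal_cpow hx0, Complex.ofReal_cpow hx1]
    push_cast
    norm_num
  have h2 := Complex.betaIntegral_scaled (a+1) (1/2) hz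
  have h3 := Complex.Gamma_mul_Gamma_eq_betaIntegral
    (s := (a+1:ℂ)) (t := (1/2:ℂ)) (by simpa using ha) (by norm_num)
  have h4 : ((a:ℂ)+1) + 1/2 = ((a + 3/2 : ℝ) : ℂ) := by push_cast; ring
  rw [h4] at h3
  have h5 : Complex.Gamma ((a + 3/2 : ℝ) : ℂ) ≠ 0 := by
    rw [Complex.Gamma_ofReal]; exact_mod_cast hg.ne'
  have h6 : Complex.betaIntegral (a+1) (1/2)
      = Complex.Gamma (a+1) * Complex.Gamma (1/2) / Complex.Gamma ((a + 3/2 : ℝ) : ℂ) := by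
    rw [eq_div_iff h5, h3]
    ring
  have h7 : ((a:ℂ)+1) + 1/2 - 1 = ((a + 1/2 : ℝ) : ℂ) := by push_cast; ring
  rw [h6, h7] at h2
  have h8 : ((a+1:ℝ):ℂ) = (a:ℂ) + 1 := by push_cast; ring
  have h9 : ((1/2:ℝ):ℂ) = (1/2:ℂ) := by push_cast; ring
  apply Complex.ofReal_injective
  rw [h1, h2, ← h8, ← h9, Complex.Gamma_ofReal, Complex.Gamma_ofReal, Complex.Gamma_ofReal,
    ← Complex.ofReal_cpow hz.le]
  push_cast
  ring

lemma nconv_nonpos : ∀ n, ∀ l : ℝ, l ≤ 0 → nconv n l = 0 := by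
  intro n
  induction n with
  | zero => intro l _; rfl
  | succ n ih =>
    match n, ih with
    | 0, _ => intro l hl; simp only [nconv, f]; rw [if_neg]; rintro ⟨h1, _⟩; linarith
    | (n+1), ih =>
      intro l hl
      show conv (nconv (n+1)) f l = 0
      unfold conv
      have : ∀ x : ℝ, nconv (n+1) x * f (l - x) = 0 := by
        intro x
        rcases le_or_gt x 0 with h | h
        · rw [ih x h, zero_mul]
        · have : f (l - x) = 0 := by
            simp only [f]; rw [if_neg]; rintro ⟨h1, _⟩; linarith
          rw [this, mul_zero]
      simp [this]

lemma conv_step (g : ℝ → ℝ) (C a : ℝ) (ha : 0 < a + 1)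
    (hg0 : ∀ l : ℝ, l ≤ 0 → g l = 0)
    (hg : ∀ l : ℝ, 0 < l → l < 1 → g l = C * l ^ a)
    {z : ℝ} (hz0 : 0 < z) (hz1 : z ≤ 1) :
    conv g f z =
      C / 2 * (Real.Gamma (a+1) * Real.Gamma (1/2) / Real.Gamma (a + 3/2)) * z ^ (a + 1/2) := by
  unfold conv
  have heq : (fun l : ℝ => g l * f (z - l)) =
      (Set.Ioo (0:ℝ) z).indicator
        (fun l => C / 2 * (l ^ a * (z - l) ^ (-(1/2) : ℝ))) := by
    funext l
    by_cases hl : l ∈ Set.Ioo (0:ℝ) z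
    · rw [Set.indicator_of_mem hl]
      obtain ⟨hl0, hlz⟩ := hl
      have h1 : f (z - l) = (1/2) * (z - l) ^ (-(1/2) : ℝ) := by
        simp only [f]; rw [if_pos ⟨by linarith, by linarith⟩]
      rw [hg l hl0 (by linarith), h1]
      ring
    · rw [Set.indicator_of_notMem hl]
      rw [Set.mem_Ioo, not_and_or] at hl
      push_neg at hl
      rcases hl with h | h
      · rw [hg0 l h, zero_mul]
      · have : f (z - l) = 0 := by
          simp only [f]; rw [if_neg]; rintro ⟨h1, _⟩; linarith
        rw [this, mul_zero]
  rw [heq, integral_indicator measurableSet_Ioo, ← integral_Ioc_eq_integral_Ioo,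
    ← intervalIntegral.integral_of_le hz0.le, intervalIntegral.integral_const_mul,
    key_beta a ha hz0]
  ring

/-- For every `m : ℕ` and `0 < z ≤ 1`, the `(2m+3)`-fold convolution of `f`
satisfies `f^{*(2m+3)}(z) = (π/4)^(m+1)·(2/3)·(2/5)⋯(2/(2m+1))·z^(m+1/2)`,
the product being empty (equal to `1`) when `m = 0`. -/
theorem odd_fold_conv_eq (m : ℕ) (z : ℝ) (hz0 : 0 < z) (hz1 : z ≤ 1) :
    nconv (2 * m + 3) z =
      (π / 4) ^ (m + 1) * (∏ k ∈ Finset.Icc 1 m, (2 / (2 * (k : ℝ) + 1))) *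
        z ^ ((m : ℝ) + 1 / 2) := by
  induction m generalizing z with
  | zero =>
    -- nconv 2 z = π/4 on (0,1]
    have h2 : ∀ w : ℝ, 0 < w → w ≤ 1 → nconv 2 w = π / 4 * w ^ (0:ℝ) := by
      intro w hw0 hw1
      show conv (nconv 1) f w = _
      have := conv_step (nconv 1) (1/2) (-(1/2)) (by norm_num)
        (fun l hl => nconv_nonpos 1 l hl)
        (fun l h0 h1 => by show f l = _; simp only [f]; rw [if_pos ⟨h0, h1⟩]) hw0 hw1
      rw [show (-(1/2) : ℝ) + 1 = 1/2 by norm_num, show (-(1/2) : ℝ) + 3/2 = 1 by norm_num,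
        show (-(1/2) : ℝ) + 1/2 = 0 by norm_num] at this
      rw [this, Real.Gamma_one, Real.Gamma_one_half_eq, div_one,
        Real.mul_self_sqrt Real.pi_pos.le]
      ring
    show conv (nconv 2) f z = _
    have := conv_step (nconv 2) (π/4) 0 (by norm_num)
      (fun l hl => nconv_nonpos 2 l hl)
      (fun l h0 h1 => by rw [h2 l h0 h1.le]) hz0 hz1
    rw [show (0:ℝ) + 1 = 1 by norm_num, show (0:ℝ) + 3/2 = 1/2 + 1 by norm_num] at this
    rw [this, Real.Gamma_one, Real.Gamma_add_one (by norm_num), Real.Gamma_one_half_eq]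
    have hπ : Real.sqrt π ≠ 0 := by positivity
    simp only [Nat.cast_zero, Finset.Icc_eq_empty_of_lt zero_lt_one, Finset.prod_empty]
    field_simp
    ring
  | succ m ih =>
    -- even step: nconv (2m+4)
    have C := (π / 4) ^ (m + 1) * (∏ k ∈ Finset.Icc 1 m, (2 / (2 * (k : ℝ) + 1)))
    have heven : ∀ w : ℝ, 0 < w → w ≤ 1 → nconv (2*m + 4) w =
        ((π / 4) ^ (m + 1) * (∏ k ∈ Finset.Icc 1 m, (2 / (2 * (k : ℝ) + 1)))) / 2 *
          (Real.Gamma ((m:ℝ) + 3/2) * Real.Gamma (1/2) / Real.Gamma ((m:ℝ) + 2)) *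
          w ^ ((m:ℝ) + 1) := by
      intro w hw0 hw1
      have h1 : nconv (2*m + 4) = conv (nconv (2*m + 3)) f := by
        show nconv (2*m + 2 + 2) = _
        rfl
      rw [h1]
      have := conv_step (nconv (2*m+3)) _ ((m:ℝ) + 1/2) (by positivity)
        (fun l hl => nconv_nonpos _ l hl)
        (fun l h0 h1 => ih l h0 h1.le) hw0 hw1
      rw [show ((m:ℝ) + 1/2) + 1 = (m:ℝ) + 3/2 by ring,
        show ((m:ℝ) + 1/2) + 3/2 = (m:ℝ) + 2 by ring,
        show ((m:ℝ) + 1/2) + 1/2 = (m:ℝ) + 1 by ring] at this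
      exact this
    -- odd step
    have h1 : nconv (2*(m+1) + 3) = conv (nconv (2*m + 4)) f := by
      show nconv (2*m + 3 + 2) = _
      rfl
    rw [h1]
    have := conv_step (nconv (2*m+4)) _ ((m:ℝ) + 1) (by positivity)
      (fun l hl => nconv_nonpos _ l hl)
      (fun l h0 h1 => heven l h0 h1.le) hz0 hz1
    rw [show ((m:ℝ) + 1) + 1 = (m:ℝ) + 2 by ring,
      show ((m:ℝ) + 1) + 3/2 = ((m:ℝ) + 3/2) + 1 by ring,
      show ((m:ℝ) + 1) + 1/2 = (m:ℝ) + 3/2 by ring] at this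
    rw [this]
    have hG32 : (0:ℝ) < Real.Gamma ((m:ℝ) + 3/2) := Real.Gamma_pos_of_pos (by positivity)
    have hG2 : (0:ℝ) < Real.Gamma ((m:ℝ) + 2) := Real.Gamma_pos_of_pos (by positivity)
    have hprod : (∏ k ∈ Finset.Icc 1 (m+1), (2 / (2 * (k : ℝ) + 1)))
        = (∏ k ∈ Finset.Icc 1 m, (2 / (2 * (k : ℝ) + 1))) * (2 / (2 * ((m:ℝ)+1) + 1)) := by
      rw [Finset.prod_Icc_succ_top (by omega)]
      push_cast
      ring_nf
    have hcast : (((m+1:ℕ)):ℝ) + 1/2 = (m:ℝ) + 3/2 := by push_cast; ring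
    rw [hcast, hprod, Real.Gamma_add_one (s := (m:ℝ) + 3/2) (by positivity),
      Real.Gamma_one_half_eq]
    set s := Real.sqrt π with hs
    have hss : π = s * s := (Real.mul_self_sqrt Real.pi_pos.le).symm
    rw [hss]
    have hs0 : s ≠ 0 := by rw [hs]; positivity
    have hm0 : ((m:ℝ) + 3/2) ≠ 0 := by positivity
    have hm1 : (2 * ((m:ℝ)+1) + 1) ≠ 0 := by positivity
    field_simp
    ring
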